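/- Incremental cross-product identity: for multisets A, dA, iA over T₁ and B, dB, iB over T₂ with dA ≤ A and dB ≤ B, let A' = (A - dA) + iA and B' = (B - dB) + iB; then the cross product of the updated databases satisfies A' ×ˢ B' = (A ×ˢ B) - (dA ×ˢ B) - ((A - dA) ×ˢ dB) + (iA ×ˢ (B - dB)) + (A' ×ˢ iB). -/
import Mathlib


def mcross {T₁ T₂ : Type*} (A : Multiset T₁) (B : Multiset T₂) : Multiset (T₁ × T₂) :=
  A.bind (fun t => B.map (fun s => (t, s)))

lemma mcross_add_left {T₁ T₂ : Type*} (X Y : Multiset T₁) (B : Multiset T₂) :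
    mcross (X + Y) B = mcross X B + mcross Y B := by
  simp [mcross, Multiset.add_bind]

lemma mcross_add_right {T₁ T₂ : Type*} (A : Multiset T₁) (X Y : Multiset T₂) :
    mcross A (X + Y) = mcross A X + mcross A Y := by
  simp [mcross, Multiset.map_add, Multiset.bind_add]

lemma mcross_sub_left {T₁ T₂ : Type*} [DecidableEq T₁] [DecidableEq (T₁ × T₂)]
    (A dA : Multiset T₁) (B : Multiset T₂) (h : dA ≤ A) :
    mcross (A - dA) B = mcross A B - mcross dA B := by
  refine eq_tsub_of_add_eq ?_
  rw [← mcross_add_left, tsub_add_cancel_of_le h]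

lemma mcross_sub_right {T₁ T₂ : Type*} [DecidableEq T₂] [DecidableEq (T₁ × T₂)]
    (A : Multiset T₁) (B dB : Multiset T₂) (h : dB ≤ B) :
    mcross A (B - dB) = mcross A B - mcross A dB := by
  refine eq_tsub_of_add_eq ?_
  rw [← mcross_add_right, tsub_add_cancel_of_le h]

theorem mcross_delta {T₁ T₂ : Type*} [DecidableEq T₁] [DecidableEq T₂]
    [DecidableEq (T₁ × T₂)]
    (A dA iA : Multiset T₁) (B dB iB : Multiset T₂)
    (hA : dA ≤ A) (hB : dB ≤ B) :
    mcross ((A - dA) + iA) ((B - dB) + iB)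
      = mcross A B - mcross dA B - mcross (A - dA) dB
          + mcross iA (B - dB) + mcross ((A - dA) + iA) iB := by
  rw [mcross_add_right, mcross_add_left, mcross_sub_right _ _ _ hB,
    ← mcross_sub_left _ _ _ hA]
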